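/- arXiv:1710.05737 — 8 statements merged into one kernel-verified Lean document; each statement's English description precedes it below -/
import Mathlib

section
/- Let p, q ≥ 2 be relatively prime integers and let c ∈ A_{pq}^ℤ be a configuration such that c(i) = 0 for all sufficiently small i. Then the series real_{pq}(G_{p,q}(c)) = ∑_{i∈ℤ} G_{p,q}(c)(−i)(pq)^i converges and equals p · real_{pq}(c). -/
/-- The local rule multiplying by `p` in base `pq`: writing `x = x₁q + x₀` with
`x₀ ∈ {0,…,q-1}`, `x₁ ∈ {0,…,p-1}`, we have `g p q x y = x₀p + y₁`. -/
def g (p q x y : ℕ) : ℕ := x % q * p + y / q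

/-- The cellular automaton `G_{p,q}` on configurations. -/
def Gca (p q : ℕ) (c : ℤ → ℕ) : ℤ → ℕ := fun i => g p q (c i) (c (i + 1))

/-!
Multiplying `real_{pq}(c)` by `p` digit by digit, `p · x = (x mod q) · p + (x div q) · pq`:
the first part stays in the same position, the second is carried one position to the left.
The cell `G(c)(i)` collects exactly the part `c(i) mod q` staying at position `i` and the
carry `c(i+1) div q` arriving from position `i + 1`.
-/

lemma summable_mul_zpow_of_bounded {r B : ℝ} (hr : 1 < r) {d : ℤ → ℝ}
    (hB : ∀ i, ‖d i‖ ≤ B) {N : ℤ} (hN : ∀ i ≤ N, d i = 0) :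
    Summable fun i : ℤ => d (-i) * r ^ i := by
  refine Summable.of_nat_of_neg ?_ ?_
  · refine summable_of_ne_finset_zero (s := Finset.range (-N).toNat) fun n hn => ?_
    rw [hN _ (by simp at hn; omega), zero_mul]
  · have hr₀ : 0 < r := zero_lt_one.trans hr
    refine Summable.of_norm_bounded
      ((summable_geometric_of_lt_one (by positivity) (inv_lt_one_of_one_lt₀ hr)).mul_left B)
      fun n => ?_
    rw [neg_neg, zpow_neg, zpow_natCast, ← inv_pow, norm_mul, norm_pow, norm_inv,
      Real.norm_of_nonneg hr₀.le]
    exact mul_le_mul_of_nonneg_right (hB n) (by positivity)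

lemma natCast_mul_zpow_eq_mod_add_div (p q x : ℕ) (i : ℤ) (hpq : p * q ≠ 0) :
    (p : ℝ) * ((x : ℝ) * ((p * q : ℕ) : ℝ) ^ i) =
      ((x % q : ℕ) : ℝ) * p * ((p * q : ℕ) : ℝ) ^ i +
        ((x / q : ℕ) : ℝ) * ((p * q : ℕ) : ℝ) ^ (i + 1) := by
  have hx : ((q * (x / q) + x % q : ℕ) : ℝ) = x := by rw [Nat.div_add_mod]
  rw [zpow_add_one₀ (by exact_mod_cast hpq), ← hx]
  push_cast
  ring

theorem stmt0_general (p q : ℕ) (hp : 2 ≤ p) (hq : 2 ≤ q)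
    (c : ℤ → ℕ) (hc : ∀ i, c i < p * q) (h0 : ∃ N : ℤ, ∀ i ≤ N, c i = 0) :
    HasSum (fun i : ℤ => (Gca p q c (-i) : ℝ) * ((p * q : ℕ) : ℝ) ^ i)
      ((p : ℝ) * ∑' i : ℤ, (c (-i) : ℝ) * ((p * q : ℕ) : ℝ) ^ i) := by
  obtain ⟨N, hN⟩ := h0
  have hpq_gt : 1 < p * q := by nlinarith
  have hr : (1 : ℝ) < ((p * q : ℕ) : ℝ) := by exact_mod_cast hpq_gt
  have hc_sum : Summable fun i : ℤ => (c (-i) : ℝ) * ((p * q : ℕ) : ℝ) ^ i :=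
    summable_mul_zpow_of_bounded hr (d := fun i => (c i : ℝ)) (B := (p * q : ℕ))
      (fun i => by rw [Real.norm_natCast]; exact_mod_cast (hc i).le)
      (N := N) (fun i hi => by simp [hN i hi])
  have hmod_sum :
      Summable fun i : ℤ => ((c (-i) % q : ℕ) : ℝ) * p * ((p * q : ℕ) : ℝ) ^ i :=
    (summable_mul_zpow_of_bounded hr (d := fun i => ((c i % q : ℕ) : ℝ)) (B := q)
      (fun i => by
        rw [Real.norm_natCast]; exact_mod_cast (Nat.mod_lt _ (by omega : 0 < q)).le)
      (N := N) (fun i hi => by simp [hN i hi])).mul_right (p : ℝ) |>.congr fun i => by ring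
  have hcarry : HasSum (fun i : ℤ => ((c (-i) / q : ℕ) : ℝ) * ((p * q : ℕ) : ℝ) ^ (i + 1))
      (p * ∑' i : ℤ, (c (-i) : ℝ) * ((p * q : ℕ) : ℝ) ^ i -
        ∑' i : ℤ, ((c (-i) % q : ℕ) : ℝ) * p * ((p * q : ℕ) : ℝ) ^ i) := by
    refine ((hc_sum.hasSum.mul_left (p : ℝ)).sub hmod_sum.hasSum).congr_fun fun i => ?_
    rw [natCast_mul_zpow_eq_mod_add_div p q (c (-i)) i (by positivity), add_sub_cancel_left]
  have hcarry_shifted := (Equiv.subRight (1 : ℤ)).hasSum_iff.mpr hcarry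
  have hG := hmod_sum.hasSum.add hcarry_shifted
  rw [add_sub_cancel] at hG
  refine hG.congr_fun fun i => ?_
  simp only [Gca, g, Function.comp_apply, Equiv.subRight_apply, sub_add_cancel, neg_sub',
    sub_neg_eq_add]
  push_cast
  ring

theorem stmt0 (p q : ℕ) (hp : 2 ≤ p) (hq : 2 ≤ q) (hpq : Nat.Coprime p q)
    (c : ℤ → ℕ) (hc : ∀ i, c i < p * q) (h0 : ∃ N : ℤ, ∀ i ≤ N, c i = 0) :
    HasSum (fun i : ℤ => (Gca p q c (-i) : ℝ) * ((p * q : ℕ) : ℝ) ^ i)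
      ((p : ℝ) * ∑' i : ℤ, (c (-i) : ℝ) * ((p * q : ℕ) : ℝ) ^ i) :=
  stmt0_general p q hp hq c hc h0
end

section
/- Let p, q ≥ 2 be relatively prime integers and x, y, z, w, a ∈ A_{pq}. If f_{p,q}(x,a,y) = f_{p,q}(z,a,w), then x ≡ z (mod q). -/
/-- The local rule of `F_{p,q}`. -/
def f (p q x y z : ℕ) : ℕ := g p q (g p q x y) (g p q y z)

/-!
Since `g a y = a₀p + y₁ < pq`, its high digit `g a y / q` is below `p`, so
`f x a y = (g x a mod q)·p + (g a y / q)` is the base-`p` division of `f x a y`, and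
`f x a y / p = g x a mod q = x₀p + a₁ (mod q)`. Equal values of `f` thus give
`x₀p ≡ z₀p (mod q)`, and `p` is invertible modulo `q`.
-/

variable {p q : ℕ}

theorem g_lt_mul (x : ℕ) {y : ℕ} (hy : y < p * q) : g p q x y < p * q := by
  have hq : 0 < q := Nat.pos_of_mul_pos_left (Nat.zero_lt_of_lt hy)
  have hy₁ : y / q < p := Nat.div_lt_of_lt_mul (by rwa [mul_comm])
  have hx₀ : x % q + 1 ≤ q := Nat.mod_lt x hq
  calc x % q * p + y / q < (x % q + 1) * p := by rw [add_one_mul]; omega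
    _ ≤ p * q := by rw [mul_comm p]; exact Nat.mul_le_mul_right p hx₀

theorem f_div_eq (x a : ℕ) {y : ℕ} (hy : y < p * q) : f p q x a y / p = g p q x a % q := by
  have hp : 0 < p := Nat.pos_of_mul_pos_right (Nat.zero_lt_of_lt hy)
  have hlow : g p q a y / q < p := Nat.div_lt_of_lt_mul (by rw [mul_comm]; exact g_lt_mul a hy)
  rw [f, g, Nat.add_div_of_dvd_right (Nat.dvd_mul_left p _), Nat.mul_div_cancel _ hp,
    Nat.div_eq_of_lt hlow, add_zero]

theorem modEq_of_g_modEq (hpq : p.Coprime q) {x z a : ℕ}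
    (h : g p q x a ≡ g p q z a [MOD q]) : x ≡ z [MOD q] :=
  (Nat.mod_modEq x q).symm.trans <|
    ((Nat.ModEq.add_right_cancel' _ h).cancel_right_of_coprime hpq.symm).trans (Nat.mod_modEq z q)

theorem stmt3_general (p q : ℕ) (hpq : Nat.Coprime p q)
    (x y z w a : ℕ) (hy : y < p * q)
    (hw : w < p * q)
    (h : f p q x a y = f p q z a w) : x % q = z % q := by
  have hg : g p q x a ≡ g p q z a [MOD q] := by
    rw [Nat.ModEq, ← f_div_eq x a hy, ← f_div_eq z a hw, h]
  exact modEq_of_g_modEq hpq hg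

theorem stmt3 (p q : ℕ) (hp : 2 ≤ p) (hq : 2 ≤ q) (hpq : Nat.Coprime p q)
    (x y z w a : ℕ) (hx : x < p * q) (hy : y < p * q) (hz : z < p * q)
    (hw : w < p * q) (ha : a < p * q)
    (h : f p q x a y = f p q z a w) : x % q = z % q :=
  stmt3_general p q hpq x y z w a hy hw h
end

section
/- Let p, q ≥ 2 be relatively prime integers and c, c' ∈ A_{pq}^ℤ. If for some i ∈ ℤ we have F_{p,q}^{-1}(c)(i+1) = F_{p,q}^{-1}(c')(i+1), c(i+1) = c'(i+1), and F_{p,q}(c)(i+1) = F_{p,q}(c')(i+1), then c(i) = c'(i). Consequently, for every k ∈ ℤ, the value F_{p,q}^k(c)(i) is uniquely determined by the three values F_{p,q}^{k−1}(c)(i+1), F_{p,q}^k(c)(i+1), and F_{p,q}^{k+1}(c)(i+1). -/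
/-- The cellular automaton `F_{p,q} = σ⁻¹ ∘ G_{p,q} ∘ G_{p,q}`, where `σ` is the left
shift `σ(c)(i) = c(i+1)`. Its inverse is `Fca q p`. -/
def Fca (p q : ℕ) (c : ℤ → ℕ) : ℤ → ℕ := fun i => Gca p q (Gca p q c) (i - 1)

/-- Integer iterates of `F_{p,q}`: for `k ≥ 0` iterate `F_{p,q}`, for `k < 0` iterate
the inverse `F_{q,p}`. -/
def Fiter (p q : ℕ) (k : ℤ) (c : ℤ → ℕ) : ℤ → ℕ :=
  if 0 ≤ k then (Fca p q)^[k.toNat] c else (Fca q p)^[(-k).toNat] c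

open Set Function

def fullShift (n : ℕ) : Set (ℤ → ℕ) := {c | ∀ i, c i < n}

lemma fullShift_mul_comm (p q : ℕ) : fullShift (q * p) = fullShift (p * q) := by
  rw [mul_comm]

section

variable {p q : ℕ}

lemma g_lt (hq : 0 < q) (x : ℕ) {y : ℕ} (hy : y < p * q) : g p q x y < p * q := by
  have hx : x % q < q := Nat.mod_lt _ hq
  have hy' : y / q < p := Nat.div_lt_of_lt_mul (by rwa [mul_comm])
  calc x % q * p + y / q < (x % q + 1) * p := by rw [add_one_mul]; omega
    _ ≤ q * p := Nat.mul_le_mul_right _ hx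
    _ = p * q := mul_comm _ _

lemma g_div (hp : 0 < p) (x : ℕ) {y : ℕ} (hy : y < p * q) : g p q x y / p = x % q := by
  rw [g, add_comm, Nat.add_mul_div_right _ _ hp,
    Nat.div_eq_of_lt (Nat.div_lt_of_lt_mul (by rwa [mul_comm])), zero_add]

lemma g_mod (x : ℕ) {y : ℕ} (hy : y < p * q) : g p q x y % p = y / q := by
  rw [g, Nat.mul_add_mod_self_right, Nat.mod_eq_of_lt (Nat.div_lt_of_lt_mul (by rwa [mul_comm]))]

lemma g_swap_g (hp : 0 < p) (x : ℕ) {y z : ℕ} (hy : y < p * q) (hz : z < p * q) :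
    g q p (g p q x y) (g p q y z) = y := by
  rw [g, g_mod x hy, g_div hp y hz, Nat.div_add_mod']

lemma mod_eq_of_g_mod_eq (hpq : p.Coprime q) {x x' y : ℕ}
    (h : g p q x y % q = g p q x' y % q) : x % q = x' % q := by
  have h' : x % q * p ≡ x' % q * p [MOD q] := Nat.ModEq.add_right_cancel' (y / q) h
  simpa [Nat.ModEq] using h'.cancel_right_of_coprime (Nat.coprime_comm.mp hpq)

lemma Gca_mapsTo (hq : 0 < q) : MapsTo (Gca p q) (fullShift (p * q)) (fullShift (p * q)) :=
  fun _ hc i ↦ g_lt hq _ (hc (i + 1))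

lemma Fca_mapsTo (hq : 0 < q) : MapsTo (Fca p q) (fullShift (p * q)) (fullShift (p * q)) :=
  fun _ hc i ↦ Gca_mapsTo hq (Gca_mapsTo hq hc) (i - 1)

lemma Fca_apply_add_one (c : ℤ → ℕ) (i : ℤ) :
    Fca p q c (i + 1) = g p q (Gca p q c i) (Gca p q c (i + 1)) := by
  simp [Fca, Gca]

lemma Gca_swap_Gca (hp : 0 < p) {c : ℤ → ℕ} (hc : c ∈ fullShift (p * q)) (i : ℤ) :
    Gca q p (Gca p q c) i = c (i + 1) :=
  g_swap_g hp _ (hc _) (hc _)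

lemma Gca_swap_Fca (hp : 0 < p) (hq : 0 < q) {c : ℤ → ℕ} (hc : c ∈ fullShift (p * q)) :
    Gca q p (Fca p q c) = Gca p q c := by
  funext i
  simpa [Gca, Fca] using Gca_swap_Gca hp (Gca_mapsTo hq hc) (i - 1)

lemma Fca_swap_Fca (hp : 0 < p) (hq : 0 < q) {c : ℤ → ℕ} (hc : c ∈ fullShift (p * q)) :
    Fca q p (Fca p q c) = c := by
  funext i
  change Gca q p (Gca q p (Fca p q c)) (i - 1) = c i
  rw [Gca_swap_Fca hp hq hc, Gca_swap_Gca hp hc, sub_add_cancel]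

lemma Fca_Fca_swap (hp : 0 < p) (hq : 0 < q) {c : ℤ → ℕ} (hc : c ∈ fullShift (p * q)) :
    Fca p q (Fca q p c) = c :=
  Fca_swap_Fca hq hp (by rwa [fullShift_mul_comm])

lemma mod_eq_of_Fca_eq (hp : 0 < p) (hq : 0 < q) (hpq : p.Coprime q) {c c' : ℤ → ℕ}
    (hc : c ∈ fullShift (p * q)) (hc' : c' ∈ fullShift (p * q)) {i : ℤ}
    (hnext : c (i + 1) = c' (i + 1)) (hF : Fca p q c (i + 1) = Fca p q c' (i + 1)) :
    c i % q = c' i % q := by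
  have hG : Gca p q c i % q = Gca p q c' i % q := by
    rw [Fca_apply_add_one, Fca_apply_add_one] at hF
    rw [← g_div hp _ (Gca_mapsTo hq hc _), ← g_div hp _ (Gca_mapsTo hq hc' _), hF]
  apply mod_eq_of_g_mod_eq hpq
  simpa only [Gca, hnext] using hG

lemma eq_of_Fca_eq (hp : 0 < p) (hq : 0 < q) (hpq : p.Coprime q) {c c' : ℤ → ℕ}
    (hc : c ∈ fullShift (p * q)) (hc' : c' ∈ fullShift (p * q)) {i : ℤ}
    (hinv : Fca q p c (i + 1) = Fca q p c' (i + 1)) (hnext : c (i + 1) = c' (i + 1))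
    (hF : Fca p q c (i + 1) = Fca p q c' (i + 1)) : c i = c' i := by
  have hmodq : c i ≡ c' i [MOD q] := mod_eq_of_Fca_eq hp hq hpq hc hc' hnext hF
  have hmodp : c i ≡ c' i [MOD p] := by
    rw [← fullShift_mul_comm] at hc hc'
    exact mod_eq_of_Fca_eq hq hp (Nat.coprime_comm.mp hpq) hc hc' hnext hinv
  exact ((Nat.modEq_and_modEq_iff_modEq_mul hpq).mp ⟨hmodp, hmodq⟩).eq_of_lt_of_lt (hc i) (hc' i)

lemma Fiter_natCast (c : ℤ → ℕ) (n : ℕ) : Fiter p q n c = (Fca p q)^[n] c := by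
  simp [Fiter]

lemma Fiter_neg_natCast (c : ℤ → ℕ) (n : ℕ) : Fiter p q (-n) c = (Fca q p)^[n] c := by
  cases n with
  | zero => simp [Fiter]
  | succ n => rw [Fiter, if_neg (by omega), neg_neg, Int.toNat_natCast]

lemma Fiter_mem (hp : 0 < p) (hq : 0 < q) {c : ℤ → ℕ} (hc : c ∈ fullShift (p * q)) (k : ℤ) :
    Fiter p q k c ∈ fullShift (p * q) := by
  obtain ⟨n, rfl | rfl⟩ := Int.eq_nat_or_neg k
  · rw [Fiter_natCast]
    exact (Fca_mapsTo hq).iterate n hc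
  · rw [Fiter_neg_natCast, ← fullShift_mul_comm]
    rw [← fullShift_mul_comm] at hc
    exact (Fca_mapsTo hp).iterate n hc

lemma Fiter_add_one (hp : 0 < p) (hq : 0 < q) {c : ℤ → ℕ} (hc : c ∈ fullShift (p * q)) (k : ℤ) :
    Fiter p q (k + 1) c = Fca p q (Fiter p q k c) := by
  obtain ⟨n, rfl | rfl⟩ := Int.eq_nat_or_neg k
  · rw [← Nat.cast_succ, Fiter_natCast, Fiter_natCast, iterate_succ_apply']
  · cases n with
    | zero => simp [Fiter]
    | succ m =>
      have hm := Fiter_mem hp hq hc (-m)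
      rw [Fiter_neg_natCast] at hm
      rw [show -((m + 1 : ℕ) : ℤ) + 1 = -m by push_cast; ring, Fiter_neg_natCast,
        Fiter_neg_natCast, iterate_succ_apply', Fca_Fca_swap hp hq hm]

lemma Fiter_sub_one (hp : 0 < p) (hq : 0 < q) {c : ℤ → ℕ} (hc : c ∈ fullShift (p * q)) (k : ℤ) :
    Fiter p q (k - 1) c = Fca q p (Fiter p q k c) := by
  obtain ⟨j, rfl⟩ : ∃ j, k = j + 1 := ⟨k - 1, by ring⟩
  rw [add_sub_cancel_right, Fiter_add_one hp hq hc, Fca_swap_Fca hp hq (Fiter_mem hp hq hc j)]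

end

theorem stmt5_general (p q : ℕ) (hpq : Nat.Coprime p q)
    (c c' : ℤ → ℕ) (hc : ∀ i, c i < p * q) (hc' : ∀ i, c' i < p * q) (i : ℤ) :
    (Fca q p c (i + 1) = Fca q p c' (i + 1) → c (i + 1) = c' (i + 1) →
      Fca p q c (i + 1) = Fca p q c' (i + 1) → c i = c' i) ∧
    (∀ k : ℤ, Fiter p q (k - 1) c (i + 1) = Fiter p q (k - 1) c' (i + 1) →
      Fiter p q k c (i + 1) = Fiter p q k c' (i + 1) →
      Fiter p q (k + 1) c (i + 1) = Fiter p q (k + 1) c' (i + 1) →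
      Fiter p q k c i = Fiter p q k c' i) := by
  have hpq_pos : 0 < p * q := (Nat.zero_le _).trans_lt (hc 0)
  have hp := Nat.pos_of_mul_pos_right hpq_pos
  have hq := Nat.pos_of_mul_pos_left hpq_pos
  refine ⟨eq_of_Fca_eq hp hq hpq hc hc', fun k hprev hcur hsucc ↦ ?_⟩
  rw [Fiter_sub_one hp hq hc, Fiter_sub_one hp hq hc'] at hprev
  rw [Fiter_add_one hp hq hc, Fiter_add_one hp hq hc'] at hsucc
  exact eq_of_Fca_eq hp hq hpq (Fiter_mem hp hq hc k) (Fiter_mem hp hq hc' k) hprev hcur hsucc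

theorem stmt5 (p q : ℕ) (hp : 2 ≤ p) (hq : 2 ≤ q) (hpq : Nat.Coprime p q)
    (c c' : ℤ → ℕ) (hc : ∀ i, c i < p * q) (hc' : ∀ i, c' i < p * q) (i : ℤ) :
    (Fca q p c (i + 1) = Fca q p c' (i + 1) → c (i + 1) = c' (i + 1) →
      Fca p q c (i + 1) = Fca p q c' (i + 1) → c i = c' i) ∧
    (∀ k : ℤ, Fiter p q (k - 1) c (i + 1) = Fiter p q (k - 1) c' (i + 1) →
      Fiter p q k c (i + 1) = Fiter p q k c' (i + 1) →
      Fiter p q (k + 1) c (i + 1) = Fiter p q (k + 1) c' (i + 1) →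
      Fiter p q k c i = Fiter p q k c' i) :=
  stmt5_general p q hpq c c' hc hc' i
end

section
/- Let p > q ≥ 2 be relatively prime integers with p ≥ 2q−1, let d ∈ {0,...,q−1}, and let k_d ∈ {0,...,p−1} and j_d ∈ {0,...,q−1} be the unique elements with k_d q ≡ d (mod p) and k_d q = j_d p + d. If a, b ∈ A_{pq} are such that a ≡ k_d (mod p) and b = f_{q,p}(x, a, y) for some x, y ∈ A_{pq}, then b ≡ j_d (mod q). -/
/-! Modulo `q`, the output of `f q p x a y` is the carry `g q p a y / p` of the middle pair.
If `a ≡ k (mod p)` this is `(k q + y₁) / p = (j p + d + y₁) / p`, which is `j` because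
`d + y₁ ≤ 2q - 2 < p`. -/

theorem g_mod_left (p q u v : ℕ) : g p q u v % p = v / q % p := by
  rw [g, Nat.mul_add_mod_self_right]

theorem f_mod_left (p q x y z : ℕ) : f p q x y z % p = g p q y z / q % p :=
  g_mod_left p q _ _

theorem g_of_mod_eq {p q a k : ℕ} (y : ℕ) (hak : a % p = k) : g q p a y = k * q + y / p := by
  rw [g, hak]

theorem add_div_eq_of_mul_eq {k q j p d r : ℕ} (hjd : k * q = j * p + d) (hlt : d + r < p) :
    (k * q + r) / p = j := by
  rw [hjd, add_assoc, Nat.add_comm, Nat.add_mul_div_right _ _ (by omega), Nat.div_eq_of_lt hlt,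
    zero_add]

theorem stmt7_general (p q : ℕ)
    (h2q : 2 * q - 1 ≤ p)
    (d : ℕ) (hd : d < q)
    (k j : ℕ) (hjq : j < q) (hjd : k * q = j * p + d)
    (a b x y : ℕ) (hy : y < p * q)
    (hak : a % p = k) (hbf : b = f q p x a y) :
    b % q = j := by
  have hyq : y / p < q := Nat.div_lt_of_lt_mul hy
  have hcarry : g q p a y / p = j := by
    rw [g_of_mod_eq y hak]
    exact add_div_eq_of_mul_eq hjd (by omega)
  rw [hbf, f_mod_left, hcarry, Nat.mod_eq_of_lt hjq]

theorem stmt7 (p q : ℕ) (hq : 2 ≤ q) (hqp : q < p) (hpq : Nat.Coprime p q)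
    (h2q : 2 * q - 1 ≤ p)
    (d : ℕ) (hd : d < q)
    (k j : ℕ) (hkp : k < p) (hkq : k * q % p = d) (hjq : j < q) (hjd : k * q = j * p + d)
    (a b x y : ℕ) (ha : a < p * q) (hb : b < p * q) (hx : x < p * q) (hy : y < p * q)
    (hak : a % p = k) (hbf : b = f q p x a y) :
    b % q = j :=
  stmt7_general p q h2q d hd k j hjq hjd a b x y hy hak hbf
end

section
/- Let p > q ≥ 2 be relatively prime integers with p ≥ 2q−1. If ξ > 0 belongs to Z_{p/q}(Y_{p,q}), then ξ/q belongs to Z_{p/q}(X_{p,q}); in particular, if Z_{p/q}(Y_{p,q}) is nonempty then Z_{p/q}(X_{p,q}) is nonempty. -/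
/-!
Write `x = ξ (p/q)^i`. Dividing by `q` shifts the fractional part by a digit: with
`r = ⌊x⌋ mod q ∈ {0, …, q-1}` one has `{x/q} = (r + {x})/q`. If `{x} ∈ [k/p, (k+1)/p)` then
`{x/q} ∈ [a/(pq), (a+1)/(pq))` with `a = rp + k < pq` and `a ≡ k (mod p)`, so the orbit of
`ξ/q` stays in `X_{p,q}` whenever the orbit of `ξ` stays in `Y_{p,q}`.
-/

/-- `Z_{p/q}(S)`: the set of reals `ξ > 0` such that the fractional part of
`ξ(p/q)^i` lies in `S` for every `i ∈ ℕ`. -/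
def Zset (p q : ℕ) (S : Set ℝ) : Set ℝ :=
  {ξ : ℝ | 0 < ξ ∧ ∀ i : ℕ, Int.fract (ξ * ((p : ℝ) / (q : ℝ)) ^ i) ∈ S}

open Set

def Yset (p q : ℕ) (kd : ℕ → ℕ) : Set ℝ :=
  ⋃ d ∈ {d : ℕ | d < q}, Ico ((kd d : ℝ) / p) (((kd d : ℝ) + 1) / p)

def Xset (p q : ℕ) (kd : ℕ → ℕ) : Set ℝ :=
  ⋃ a ∈ {a : ℕ | a < p * q ∧ ∃ d < q, a % p = kd d},
    Ico ((a : ℝ) / (p * q)) (((a : ℝ) + 1) / (p * q))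

section OrderedField

variable {K : Type*} [Field K] [LinearOrder K] [IsStrictOrderedRing K]

lemma Int.exists_fract_div_natCast_eq [FloorRing K] {q : ℕ} (hq : 0 < q) (x : K) :
    ∃ r < q, Int.fract (x / q) = (r + Int.fract x) / q := by
  have hq' : (q : ℤ) ≠ 0 := by exact_mod_cast hq.ne'
  have hr₀ := Int.emod_nonneg ⌊x⌋ hq'
  have hrq := Int.emod_lt_of_pos ⌊x⌋ (Int.natCast_pos.mpr hq)
  refine ⟨(⌊x⌋ % q).toNat, by omega, ?_⟩
  have hfloor : ((q * (⌊x⌋ / q) + ((⌊x⌋ % q).toNat : ℤ) : ℤ) : K) = ⌊x⌋ := by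
    rw [Int.toNat_of_nonneg hr₀, Int.mul_ediv_add_emod]
  push_cast at hfloor
  rw [Int.fract, Int.floor_div_natCast, Int.fract]
  field_simp
  linarith

lemma add_div_mem_Ico_of_mem_Ico {p q k r : ℕ} (hq : 0 < q) {y : K}
    (hy : y ∈ Ico ((k : K) / p) ((k + 1) / p)) :
    (r + y) / q ∈ Ico (((r * p + k : ℕ) : K) / (p * q)) (((r * p + k : ℕ) + 1) / (p * q)) := by
  have hp : (0 : K) < p := by
    rcases Nat.eq_zero_or_pos p with rfl | hp
    · simp at hy
    · exact_mod_cast hp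
  have hq' : (0 : K) < q := by exact_mod_cast hq
  rw [mem_Ico, div_le_iff₀ hp, lt_div_iff₀ hp] at hy
  rw [mem_Ico, div_le_div_iff₀ (by positivity) hq', div_lt_div_iff₀ hq' (by positivity)]
  push_cast
  constructor <;> nlinarith

end OrderedField

section

variable {p q : ℕ} {kd : ℕ → ℕ}

lemma fract_div_mem_Xset (hq : 0 < q) (hkd : ∀ d < q, kd d < p) {x : ℝ}
    (hx : Int.fract x ∈ Yset p q kd) : Int.fract (x / q) ∈ Xset p q kd := by
  obtain ⟨r, hrq, hfract⟩ := Int.exists_fract_div_natCast_eq hq x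
  simp only [Yset, mem_iUnion, mem_ofPred_eq, exists_prop] at hx
  obtain ⟨d, hd, hxd⟩ := hx
  have hkp := hkd d hd
  have hdigit : r * p + kd d < p * q := by nlinarith
  simp only [Xset, mem_iUnion, mem_ofPred_eq, exists_prop]
  refine ⟨r * p + kd d, ⟨hdigit, d, hd, ?_⟩, ?_⟩
  · rw [Nat.mul_add_mod_self_right, Nat.mod_eq_of_lt hkp]
  · rw [hfract]
    exact add_div_mem_Ico_of_mem_Ico hq hxd

lemma div_mem_Zset_Xset (hq : 0 < q) (hkd : ∀ d < q, kd d < p) {ξ : ℝ}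
    (hξ : ξ ∈ Zset p q (Yset p q kd)) : ξ / q ∈ Zset p q (Xset p q kd) := by
  refine ⟨div_pos hξ.1 (Nat.cast_pos.mpr hq), fun i => ?_⟩
  rw [div_mul_eq_mul_div]
  exact fract_div_mem_Xset hq hkd (hξ.2 i)

end

theorem stmt9_general (p q : ℕ) (hq : 2 ≤ q)
    (kd : ℕ → ℕ) (hkd : ∀ d < q, kd d < p ∧ kd d * q % p = d) :
    (∀ ξ : ℝ,
      ξ ∈ Zset p q (⋃ d ∈ {d : ℕ | d < q},
          Set.Ico ((kd d : ℝ) / p) (((kd d : ℝ) + 1) / p)) →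
      ξ / q ∈ Zset p q (⋃ a ∈ {a : ℕ | a < p * q ∧ ∃ d < q, a % p = kd d},
          Set.Ico ((a : ℝ) / (p * q)) (((a : ℝ) + 1) / (p * q)))) ∧
    ((Zset p q (⋃ d ∈ {d : ℕ | d < q},
        Set.Ico ((kd d : ℝ) / p) (((kd d : ℝ) + 1) / p))).Nonempty →
      (Zset p q (⋃ a ∈ {a : ℕ | a < p * q ∧ ∃ d < q, a % p = kd d},
        Set.Ico ((a : ℝ) / (p * q)) (((a : ℝ) + 1) / (p * q)))).Nonempty) := by
  have hdiv : ∀ ξ, ξ ∈ Zset p q (Yset p q kd) → ξ / q ∈ Zset p q (Xset p q kd) :=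
    fun _ => div_mem_Zset_Xset (by omega) fun d hd => (hkd d hd).1
  exact ⟨hdiv, fun ⟨ξ, hξ⟩ => ⟨ξ / q, hdiv ξ hξ⟩⟩

theorem stmt9 (p q : ℕ) (hq : 2 ≤ q) (hqp : q < p) (hpq : Nat.Coprime p q)
    (h2q : 2 * q - 1 ≤ p)
    (kd : ℕ → ℕ) (hkd : ∀ d < q, kd d < p ∧ kd d * q % p = d) :
    (∀ ξ : ℝ,
      ξ ∈ Zset p q (⋃ d ∈ {d : ℕ | d < q},
          Set.Ico ((kd d : ℝ) / p) (((kd d : ℝ) + 1) / p)) →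
      ξ / q ∈ Zset p q (⋃ a ∈ {a : ℕ | a < p * q ∧ ∃ d < q, a % p = kd d},
          Set.Ico ((a : ℝ) / (p * q)) (((a : ℝ) + 1) / (p * q)))) ∧
    ((Zset p q (⋃ d ∈ {d : ℕ | d < q},
        Set.Ico ((kd d : ℝ) / p) (((kd d : ℝ) + 1) / p))).Nonempty →
      (Zset p q (⋃ a ∈ {a : ℕ | a < p * q ∧ ∃ d < q, a % p = kd d},
        Set.Ico ((a : ℝ) / (p * q)) (((a : ℝ) + 1) / (p * q)))).Nonempty) :=
  stmt9_general p q hq kd hkd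
end

section
/- Let p > q ≥ 2 be relatively prime integers with p ≥ 2q−1, and let k > 0. Then there exists a set S ⊆ [0,1) which is a union of at most q^{2k} half-open intervals, each of length (pq)^{-k} (so of total length at most (q/p)^k), such that Z_{p/q}(S) is nonempty. -/
open Set Finset

lemma not_forall_mul_eq_mul_succ {p q : ℕ} (hpq : p.Coprime q) (hq : 2 ≤ q) {M : ℕ → ℕ}
    (hM : M 0 ≠ 0) : ¬ ∀ j, p * M j = q * M (j + 1) := by
  intro h
  have hpow : ∀ t, p ^ t * M 0 = q ^ t * M t := by
    intro t
    induction t with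
    | zero => simp
    | succ t ih => rw [pow_succ', pow_succ, mul_assoc, ih, mul_left_comm, h, mul_assoc]
  have hdvd : ∀ t, q ^ t ∣ M 0 := fun t =>
    ((hpq.pow t t).symm.dvd_mul_left).1 ⟨M t, hpow t⟩
  have := calc M 0 < 2 ^ M 0 := Nat.lt_two_pow_self
    _ ≤ q ^ M 0 := Nat.pow_le_pow_left hq _
    _ ≤ M 0 := Nat.le_of_dvd (Nat.pos_of_ne_zero hM) (hdvd _)
  exact this.false

lemma exists_forall_mul_pow_mem_Ico {s : ℝ} (hs : 0 < s) {N : ℕ → ℝ}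
    (hlow : ∀ m, N m * s ≤ N (m + 1)) (hupp : ∀ m, N (m + 1) + 1 ≤ (N m + 1) * s)
    (hstrict : ∀ m, ∃ j ≥ m, N (j + 1) + 1 < (N j + 1) * s) :
    ∃ ζ, ∀ m, ζ * s ^ m ∈ Ico (N m) (N m + 1) := by
  set a : ℕ → ℝ := fun m => N m / s ^ m
  set b : ℕ → ℝ := fun m => (N m + 1) / s ^ m
  have hpow : ∀ m, 0 < s ^ m := fun m => pow_pos hs m
  have hsucc : ∀ x m, x / s ^ (m + 1) = x / s / s ^ m := fun x m => by rw [pow_succ', div_div]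
  have ha : Monotone a := monotone_nat_of_le_succ fun m => by
    simp only [a, hsucc]
    exact div_le_div_of_nonneg_right ((le_div_iff₀ hs).2 (hlow m)) (hpow m).le
  have hb : Antitone b := antitone_nat_of_succ_le fun m => by
    simp only [b, hsucc]
    exact div_le_div_of_nonneg_right ((div_le_iff₀ hs).2 (hupp m)) (hpow m).le
  have hab : a ≤ b := fun m => div_le_div_of_nonneg_right (by linarith) (hpow m).le
  have hζ := mem_iInter.1 (ha.ciSup_mem_iInter_Icc_of_antitone hb hab)
  refine ⟨⨆ m, a m, fun m => ⟨(div_le_iff₀ (hpow m)).1 (hζ m).1, ?_⟩⟩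
  obtain ⟨j, hjm, hj⟩ := hstrict m
  have hbj : b (j + 1) < b j := by
    simp only [b, hsucc]
    exact div_lt_div_of_pos_right ((div_lt_iff₀ hs).2 hj) (hpow j)
  exact (lt_div_iff₀ (hpow m)).1 (((hζ (j + 1)).2.trans_lt hbj).trans_le (hb hjm))

lemma fract_mem_Ico_mod_mul_inv {M N : ℕ} (hM : 0 < M) {y : ℝ}
    (hy : y ∈ Ico (N * (M : ℝ)⁻¹) (N * (M : ℝ)⁻¹ + (M : ℝ)⁻¹)) :
    Int.fract y ∈ Ico ((N % M : ℕ) * (M : ℝ)⁻¹) ((N % M : ℕ) * (M : ℝ)⁻¹ + (M : ℝ)⁻¹) := by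
  have hMc : (M : ℝ) * (M : ℝ)⁻¹ = 1 := mul_inv_cancel₀ (by positivity)
  have hN : (N : ℝ) * (M : ℝ)⁻¹ = (N / M : ℕ) + (N % M : ℕ) * (M : ℝ)⁻¹ := by
    have hcast : (N : ℝ) = M * (N / M : ℕ) + (N % M : ℕ) := by
      exact_mod_cast (Nat.div_add_mod N M).symm
    linear_combination ((N / M : ℕ) : ℝ) * hMc + (M : ℝ)⁻¹ * hcast
  have hr : (N % M : ℕ) * (M : ℝ)⁻¹ + (M : ℝ)⁻¹ ≤ 1 := by
    have : ((N % M : ℕ) : ℝ) + 1 ≤ M := by exact_mod_cast Nat.mod_lt N hM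
    nlinarith [inv_pos.2 (show (0 : ℝ) < M by positivity)]
  have hfract : Int.fract y = y - (N / M : ℕ) := by
    rw [Int.fract_eq_iff]
    have : (0 : ℝ) ≤ (N % M : ℕ) * (M : ℝ)⁻¹ := by positivity
    exact ⟨by linarith [hy.1], by linarith [hy.2], (N / M : ℕ), by rw [Int.cast_natCast]; ring⟩
  rw [hfract]
  constructor <;> linarith [hy.1, hy.2]

lemma card_filter_range_mul_le {P Q : ℕ} (h : P.Coprime Q) (X : Finset (ZMod P))
    (Y : Finset (ZMod Q)) :
    #{a ∈ range (P * Q) | ((Q * a : ℕ) : ZMod P) ∈ X ∧ ((P * a : ℕ) : ZMod Q) ∈ Y} ≤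
      #X * #Y := by
  rw [← card_product]
  refine card_le_card_of_injOn (fun a => (((Q * a : ℕ) : ZMod P), ((P * a : ℕ) : ZMod Q)))
    (fun a ha => mem_product.2 (mem_filter.1 ha).2) ?_
  intro a ha b hb hab
  simp only [Prod.mk.injEq, ZMod.natCast_eq_natCast_iff] at hab
  have hP : a ≡ b [MOD P] := hab.1.cancel_left_of_coprime h
  have hQ : a ≡ b [MOD Q] := hab.2.cancel_left_of_coprime h.symm
  exact ((Nat.modEq_and_modEq_iff_modEq_mul h).1 ⟨hP, hQ⟩).eq_of_lt_of_lt
    (mem_range.1 (mem_filter.1 ha).1) (mem_range.1 (mem_filter.1 hb).1)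

lemma biUnion_Ico_mul_inv_subset_Ico {M : ℕ} {A : Finset ℕ} (hA : ∀ a ∈ A, a < M) :
    ⋃ a ∈ A, Ico (a * (M : ℝ)⁻¹) (a * (M : ℝ)⁻¹ + (M : ℝ)⁻¹) ⊆ Ico 0 1 :=
  iUnion₂_subset fun a ha => Ico_subset_Ico (by positivity) <| by
    have hM : (0 : ℝ) < M := Nat.cast_pos.2 (by linarith [hA a ha])
    rw [← add_one_mul, ← div_eq_mul_inv, div_le_one hM]
    exact_mod_cast hA a ha

lemma volume_biUnion_Ico_le {ι : Type*} (A : Finset ι) (l : ι → ℝ) (c : ℝ) :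
    MeasureTheory.volume (⋃ a ∈ A, Ico (l a) (l a + c)) ≤ #A * ENNReal.ofReal c := by
  refine (MeasureTheory.measure_biUnion_finset_le A _).trans ?_
  simp [Real.volume_Ico]

-- `digitSet p q t = {∑_{j<t} p^(t-1-j) q^j v_j | v_j < q}`
def digitSet (p q : ℕ) : ℕ → Finset ℕ
  | 0 => {0}
  | t + 1 => (digitSet p q t ×ˢ range q).image fun x => p * x.1 + q ^ t * x.2

lemma card_digitSet_le (p q t : ℕ) : #(digitSet p q t) ≤ q ^ t := by
  induction t with
  | zero => simp [digitSet]
  | succ t ih =>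
    calc #(digitSet p q (t + 1)) ≤ #(digitSet p q t ×ˢ range q) := card_image_le
      _ ≤ q ^ (t + 1) := by rw [card_product, card_range, pow_succ]; gcongr

def IsDigitSeq (p q : ℕ) (N : ℕ → ℕ) : Prop :=
  ∀ m, ∃ v < q, q * N (m + 1) = p * N m + v

namespace IsDigitSeq

variable {p q : ℕ} {N : ℕ → ℕ}

lemma exists_mem_digitSet (hN : IsDigitSeq p q N) (m t : ℕ) :
    ∃ d ∈ digitSet p q t, q ^ t * N (m + t) = p ^ t * N m + d := by
  induction t with
  | zero => exact ⟨0, by simp [digitSet]⟩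
  | succ t ih =>
    obtain ⟨d, hd, hdt⟩ := ih
    obtain ⟨v, hv, hvt⟩ := hN (m + t)
    refine ⟨p * d + q ^ t * v, mem_image.2 ⟨(d, v), mem_product.2 ⟨hd, mem_range.2 hv⟩, rfl⟩, ?_⟩
    rw [← add_assoc, pow_succ', pow_succ]
    linear_combination q ^ t * hvt + p * hdt

lemma mul_le_mul_succ (hN : IsDigitSeq p q N) (m : ℕ) : p * N m ≤ q * N (m + 1) := by
  obtain ⟨v, -, h⟩ := hN m
  omega

lemma mul_succ_add_one_le (hN : IsDigitSeq p q N) (h2q : 2 * q - 1 ≤ p) (m : ℕ) :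
    q * (N (m + 1) + 1) ≤ p * (N m + 1) := by
  obtain ⟨v, hv, h⟩ := hN m
  rw [mul_add_one, mul_add_one]
  omega

lemma exists_ge_mul_succ_add_one_lt (hN : IsDigitSeq p q N) (hpq : p.Coprime q) (hq : 2 ≤ q)
    (h2q : 2 * q - 1 ≤ p) (m : ℕ) : ∃ j ≥ m, q * (N (j + 1) + 1) < p * (N j + 1) := by
  by_contra! h
  exact not_forall_mul_eq_mul_succ hpq hq (M := fun j => N (m + j) + 1) (Nat.succ_ne_zero _)
    fun j => le_antisymm (h (m + j) (Nat.le_add_right m j)) (hN.mul_succ_add_one_le h2q _)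

lemma exists_forall_mul_div_pow_mem_Ico (hN : IsDigitSeq p q N) (hpq : p.Coprime q)
    (hq : 2 ≤ q) (h2q : 2 * q - 1 ≤ p) :
    ∃ ζ : ℝ, ∀ m, ζ * ((p : ℝ) / q) ^ m ∈ Ico (N m : ℝ) (N m + 1) := by
  have hqR : (0 : ℝ) < q := by positivity
  have hpR : (0 : ℝ) < p := Nat.cast_pos.2 (by omega)
  refine exists_forall_mul_pow_mem_Ico (div_pos hpR hqR) (fun m => ?_) (fun m => ?_) fun m => ?_
  · have h : ((p * N m : ℕ) : ℝ) ≤ (q * N (m + 1) : ℕ) := by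
      exact_mod_cast hN.mul_le_mul_succ m
    push_cast at h
    rw [mul_div_assoc', div_le_iff₀ hqR]
    linarith
  · have h : ((q * (N (m + 1) + 1) : ℕ) : ℝ) ≤ (p * (N m + 1) : ℕ) := by
      exact_mod_cast hN.mul_succ_add_one_le h2q m
    push_cast at h
    rw [mul_div_assoc', le_div_iff₀ hqR]
    linarith
  · obtain ⟨j, hjm, hj⟩ := hN.exists_ge_mul_succ_add_one_lt hpq hq h2q m
    have h : ((q * (N (j + 1) + 1) : ℕ) : ℝ) < (p * (N j + 1) : ℕ) := by exact_mod_cast hj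
    push_cast at h
    refine ⟨j, hjm, ?_⟩
    rw [mul_div_assoc', lt_div_iff₀ hqR]
    linarith

end IsDigitSeq

def ceilSeq (p q : ℕ) : ℕ → ℕ
  | 0 => 1
  | m + 1 => (p * ceilSeq p q m + q - 1) / q

lemma isDigitSeq_ceilSeq {p q : ℕ} (hq : 0 < q) : IsDigitSeq p q (ceilSeq p q) := by
  intro m
  have h := Nat.div_add_mod (p * ceilSeq p q m + q - 1) q
  have hr := Nat.mod_lt (p * ceilSeq p q m + q - 1) hq
  exact ⟨q * ceilSeq p q (m + 1) - p * ceilSeq p q m, by simp only [ceilSeq]; omega,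
    by simp only [ceilSeq]; omega⟩

def residueSet (p q k : ℕ) : Finset ℕ :=
  {a ∈ range (p ^ k * q ^ k) |
    ((q ^ k * a : ℕ) : ZMod (p ^ k)) ∈ (digitSet p q k).image (↑) ∧
    ((p ^ k * a : ℕ) : ZMod (q ^ k)) ∈ (digitSet p q k).image fun d : ℕ => -(d : ZMod (q ^ k))}

lemma card_residueSet_le {p q : ℕ} (hpq : p.Coprime q) (k : ℕ) :
    #(residueSet p q k) ≤ q ^ (2 * k) := by
  calc #(residueSet p q k) ≤ #((digitSet p q k).image ((↑) : ℕ → ZMod (p ^ k))) *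
        #((digitSet p q k).image fun d : ℕ => -(d : ZMod (q ^ k))) :=
        card_filter_range_mul_le (hpq.pow k k) _ _
    _ ≤ q ^ k * q ^ k := by
        gcongr <;> exact card_image_le.trans (card_digitSet_le p q k)
    _ = q ^ (2 * k) := by rw [two_mul, pow_add]

lemma IsDigitSeq.mod_mem_residueSet {p q : ℕ} {N : ℕ → ℕ} (hN : IsDigitSeq p q N)
    (hp : 0 < p) (hq : 0 < q) (k i : ℕ) :
    N (i + k) % (p ^ k * q ^ k) ∈ residueSet p q k := by
  have hmod : ∀ {R : ℕ}, R ∣ p ^ k * q ^ k →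
      ((N (i + k) % (p ^ k * q ^ k) : ℕ) : ZMod R) = N (i + k) := fun hR =>
    (ZMod.natCast_eq_natCast_iff _ _ _).2 ((Nat.mod_modEq _ _).of_dvd hR)
  obtain ⟨d, hd, hdt⟩ := hN.exists_mem_digitSet i k
  obtain ⟨d', hd', hdt'⟩ := hN.exists_mem_digitSet (i + k) k
  refine mem_filter.2 ⟨mem_range.2 (Nat.mod_lt _ (by positivity)), mem_image.2 ⟨d, hd, ?_⟩,
    mem_image.2 ⟨d', hd', ?_⟩⟩
  · rw [Nat.cast_mul, hmod (dvd_mul_right _ _), ← Nat.cast_mul, hdt, Nat.cast_add, Nat.cast_mul,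
      ZMod.natCast_self, zero_mul, zero_add]
  · have h0 : ((p ^ k * N (i + k) + d' : ℕ) : ZMod (q ^ k)) = 0 := by
      rw [← hdt', Nat.cast_mul, ZMod.natCast_self, zero_mul]
    rw [Nat.cast_add] at h0
    rw [Nat.cast_mul, hmod (dvd_mul_left _ _), ← Nat.cast_mul]
    exact (eq_neg_of_add_eq_zero_left h0).symm

lemma zset_biUnion_residueSet_nonempty {p q : ℕ} (hpq : p.Coprime q) (hq : 2 ≤ q)
    (h2q : 2 * q - 1 ≤ p) (k : ℕ) :
    (Zset p q (⋃ a ∈ residueSet p q k, Ico (a * ((p ^ k * q ^ k : ℕ) : ℝ)⁻¹)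
      (a * ((p ^ k * q ^ k : ℕ) : ℝ)⁻¹ + ((p ^ k * q ^ k : ℕ) : ℝ)⁻¹))).Nonempty := by
  have hp : 0 < p := by omega
  have hN := isDigitSeq_ceilSeq (p := p) (by omega : 0 < q)
  obtain ⟨ζ, hζ⟩ := hN.exists_forall_mul_div_pow_mem_Ico hpq hq h2q
  have hζ1 : 1 ≤ ζ := by simpa [ceilSeq] using (hζ 0).1
  have hM : 0 < p ^ k * q ^ k := by positivity
  set c : ℝ := ((p ^ k * q ^ k : ℕ) : ℝ)⁻¹
  have hc : 0 < c := by positivity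
  refine ⟨ζ * (p / q : ℝ) ^ k * c, by positivity, fun i => mem_iUnion₂.2
    ⟨_, hN.mod_mem_residueSet hp (by omega) k i, fract_mem_Ico_mod_mul_inv hM ?_⟩⟩
  obtain ⟨hlow, hupp⟩ := hζ (i + k)
  rw [show ζ * (p / q : ℝ) ^ k * c * (p / q : ℝ) ^ i = ζ * (p / q : ℝ) ^ (i + k) * c by ring]
  exact ⟨mul_le_mul_of_nonneg_right hlow hc.le, by nlinarith⟩

theorem stmt10_general (p q : ℕ) (hq : 2 ≤ q) (hpq : Nat.Coprime p q)
    (h2q : 2 * q - 1 ≤ p) (k : ℕ) :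
    ∃ (n : ℕ) (l : Fin n → ℝ), n ≤ q ^ (2 * k) ∧
      (⋃ j, Set.Ico (l j) (l j + ((p * q : ℝ))⁻¹ ^ k)) ⊆ Set.Ico (0 : ℝ) 1 ∧
      MeasureTheory.volume (⋃ j, Set.Ico (l j) (l j + ((p * q : ℝ))⁻¹ ^ k)) ≤
        ENNReal.ofReal (((q : ℝ) / (p : ℝ)) ^ k) ∧
      (Zset p q (⋃ j, Set.Ico (l j) (l j + ((p * q : ℝ))⁻¹ ^ k))).Nonempty := by
  set A := residueSet p q k
  set c : ℝ := ((p ^ k * q ^ k : ℕ) : ℝ)⁻¹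
  have hc : ((p * q : ℝ))⁻¹ ^ k = c := by
    simp only [c, Nat.cast_mul, Nat.cast_pow, mul_pow, inv_pow]
  have hU : ⋃ j, Ico ((A.equivFin.symm j : ℕ) * c) ((A.equivFin.symm j : ℕ) * c + c) =
      ⋃ a ∈ A, Ico (a * c) (a * c + c) :=
    (A.equivFin.symm.iSup_comp (g := fun a : A => Ico ((a : ℕ) * c) (a * c + c))).trans
      (iUnion_subtype _ _)
  refine ⟨#A, fun j => (A.equivFin.symm j : ℕ) * c, card_residueSet_le hpq k, ?_⟩
  simp only [hc, hU]
  refine ⟨biUnion_Ico_mul_inv_subset_Ico fun a ha => mem_range.1 (mem_filter.1 ha).1,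
    (volume_biUnion_Ico_le A _ c).trans ?_, zset_biUnion_residueSet_nonempty hpq hq h2q k⟩
  have hp : (0 : ℝ) < p := Nat.cast_pos.2 (by omega)
  calc (#A : ENNReal) * ENNReal.ofReal c ≤ ((q ^ (2 * k) : ℕ) : ENNReal) * ENNReal.ofReal c := by
        gcongr; exact card_residueSet_le hpq k
    _ = ENNReal.ofReal (((q : ℝ) / p) ^ k) := by
        rw [← ENNReal.ofReal_natCast, ← ENNReal.ofReal_mul (by positivity)]
        congr 1
        simp only [c]
        push_cast
        rw [two_mul, pow_add, div_pow]
        field_simp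

theorem stmt10 (p q : ℕ) (hq : 2 ≤ q) (hqp : q < p) (hpq : Nat.Coprime p q)
    (h2q : 2 * q - 1 ≤ p) (k : ℕ) (hk : 0 < k) :
    ∃ (n : ℕ) (l : Fin n → ℝ), n ≤ q ^ (2 * k) ∧
      (⋃ j, Set.Ico (l j) (l j + ((p * q : ℝ))⁻¹ ^ k)) ⊆ Set.Ico (0 : ℝ) 1 ∧
      MeasureTheory.volume (⋃ j, Set.Ico (l j) (l j + ((p * q : ℝ))⁻¹ ^ k)) ≤
        ENNReal.ofReal (((q : ℝ) / (p : ℝ)) ^ k) ∧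
      (Zset p q (⋃ j, Set.Ico (l j) (l j + ((p * q : ℝ))⁻¹ ^ k))).Nonempty :=
  stmt10_general p q hq hpq h2q k
end

section
/- Let p, q ≥ 2 be relatively prime integers, let k ≥ 2, let w₁, w₂ be words of length k over A_{pq}, and let t > 0 be a natural number. Then: (1) if int(w₁) < q^t, then int(G_{p,q}(w₁)) < q^{t−1}; and (2) if int(w₂) ≡ int(w₁) + q^t (mod (pq)^k), then int(G_{p,q}(w₂)) ≡ int(G_{p,q}(w₁)) + q^{t−1} (mod (pq)^{k−1}). -/
/-- `G_{p,q}` applied to a word: the `i`-th letter of the image is `g` applied to the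
`i`-th and `(i+1)`-st letters of `w`; the image is one letter shorter. -/
def Gw (p q : ℕ) (w : List ℕ) : List ℕ := List.zipWith (g p q) w w.tail

/-- `int(w)`: the integer having `w` as a base-`b` representation
(the first letter of `w` is the most significant digit). -/
def intw (b : ℕ) (w : List ℕ) : ℕ := Nat.ofDigits b w.reverse

/-!
Dividing `int(w)` by `q` shifts every letter: `x₁q + x₀` followed by `y₁q + y₀` contributes
`x₁ * (pq) + (x₀p + y₁)` to `int(w) / q`, so `int(w) / q = (w(1) / q) (pq)^(k-1) + int(G(w))`.
Hence `int(G(w)) ≤ int(w) / q` and `int(G(w)) ≡ int(w) / q` modulo `(pq)^(k-1)`, and both claims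
follow by dividing `int(w₁) < q^t` and `int(w₂) ≡ int(w₁) + q^t` by `q`.
-/

theorem Nat.ModEq.div_of_mul_left {a b c m : ℕ} (h : a ≡ b [MOD c * m]) :
    a / c ≡ b / c [MOD m] := by
  rcases Nat.eq_zero_or_pos c with rfl | hc
  · simp [Nat.ModEq]
  apply Nat.ModEq.mul_left_cancel' hc.ne'
  apply Nat.ModEq.add_right_cancel' (a % c)
  rw [Nat.div_add_mod, (h.of_mul_right m : a % c = b % c), Nat.div_add_mod]
  exact h

lemma intw_cons (b x : ℕ) (w : List ℕ) :
    intw b (x :: w) = x * b ^ w.length + intw b w := by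
  simp only [intw, List.reverse_cons, Nat.ofDigits_append, List.length_reverse,
    Nat.ofDigits_singleton]
  ring

lemma Gw_cons_cons (p q x y : ℕ) (w : List ℕ) :
    Gw p q (x :: y :: w) = g p q x y :: Gw p q (y :: w) := rfl

lemma length_Gw (p q : ℕ) (w : List ℕ) : (Gw p q w).length = w.length - 1 := by
  simp [Gw]

lemma intw_cons_div {p q : ℕ} (hq : 0 < q) (x : ℕ) (w : List ℕ) :
    intw (p * q) (x :: w) / q = x / q * (p * q) ^ w.length + intw (p * q) (Gw p q (x :: w)) := by
  induction w generalizing x with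
  | nil => simp [intw, Gw]
  | cons y w ih =>
    have hx : x * p = x / q * (p * q) + x % q * p := by
      conv_lhs => rw [← Nat.div_add_mod x q]
      ring
    rw [intw_cons, List.length_cons, pow_succ,
      show x * ((p * q) ^ w.length * (p * q)) = q * (x * p * (p * q) ^ w.length) by ring,
      Nat.mul_add_div hq, ih, Gw_cons_cons, intw_cons, length_Gw, List.length_cons,
      Nat.add_sub_cancel, hx, g]
    ring

lemma intw_Gw_le_div {p q : ℕ} (hq : 0 < q) (w : List ℕ) :
    intw (p * q) (Gw p q w) ≤ intw (p * q) w / q := by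
  cases w with
  | nil => simp [Gw, intw]
  | cons x w => rw [intw_cons_div hq]; omega

lemma intw_Gw_modEq_div {p q : ℕ} (hq : 0 < q) (w : List ℕ) :
    intw (p * q) (Gw p q w) ≡ intw (p * q) w / q [MOD (p * q) ^ (w.length - 1)] := by
  cases w with
  | nil => simp [Gw, intw, Nat.modEq_one]
  | cons x w =>
    rw [intw_cons_div hq, List.length_cons, Nat.add_sub_cancel]
    exact (Nat.modEq_iff_dvd' (Nat.le_add_left _ _)).mpr (by simp)

theorem stmt13_general (p q : ℕ) (hq : 2 ≤ q)
    (k : ℕ) (w₁ w₂ : List ℕ)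
    (hw₁ : w₁.length = k) (hw₂ : w₂.length = k)
    (t : ℕ) (ht : 0 < t) :
    (intw (p * q) w₁ < q ^ t → intw (p * q) (Gw p q w₁) < q ^ (t - 1)) ∧
    (intw (p * q) w₂ ≡ intw (p * q) w₁ + q ^ t [MOD (p * q) ^ k] →
      intw (p * q) (Gw p q w₂) ≡ intw (p * q) (Gw p q w₁) + q ^ (t - 1)
        [MOD (p * q) ^ (k - 1)]) := by
  have hq0 : 0 < q := by omega
  have hqt : q ^ t = q ^ (t - 1) * q := by rw [← pow_succ, Nat.sub_add_cancel ht]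
  constructor
  · intro h
    refine (intw_Gw_le_div hq0 w₁).trans_lt ?_
    rwa [Nat.div_lt_iff_lt_mul hq0, ← hqt]
  · intro h
    rcases k with _ | n
    · simp [Nat.modEq_one]
    have h₁ := intw_Gw_modEq_div (p := p) hq0 w₁
    have h₂ := intw_Gw_modEq_div (p := p) hq0 w₂
    rw [hw₁, Nat.add_sub_cancel] at h₁
    rw [hw₂, Nat.add_sub_cancel] at h₂
    rw [show (p * q) ^ (n + 1) = q * (p * (p * q) ^ n) by ring] at h
    calc intw (p * q) (Gw p q w₂)
        ≡ intw (p * q) w₂ / q [MOD (p * q) ^ n] := h₂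
      _ ≡ (intw (p * q) w₁ + q ^ t) / q [MOD (p * q) ^ n] := h.div_of_mul_left.of_mul_left p
      _ = intw (p * q) w₁ / q + q ^ (t - 1) := by rw [hqt, Nat.add_mul_div_right _ _ hq0]
      _ ≡ intw (p * q) (Gw p q w₁) + q ^ (t - 1) [MOD (p * q) ^ n] := h₁.symm.add_right _

theorem stmt13 (p q : ℕ) (hp : 2 ≤ p) (hq : 2 ≤ q) (hpq : Nat.Coprime p q)
    (k : ℕ) (hk : 2 ≤ k) (w₁ w₂ : List ℕ)
    (hw₁ : w₁.length = k) (hw₂ : w₂.length = k)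
    (hb₁ : ∀ x ∈ w₁, x < p * q) (hb₂ : ∀ x ∈ w₂, x < p * q)
    (t : ℕ) (ht : 0 < t) :
    (intw (p * q) w₁ < q ^ t → intw (p * q) (Gw p q w₁) < q ^ (t - 1)) ∧
    (intw (p * q) w₂ ≡ intw (p * q) w₁ + q ^ t [MOD (p * q) ^ k] →
      intw (p * q) (Gw p q w₂) ≡ intw (p * q) (Gw p q w₁) + q ^ (t - 1)
        [MOD (p * q) ^ (k - 1)]) :=
  stmt13_general p q hq k w₁ w₂ hw₁ hw₂ t ht
end

section
/- Let p, q ≥ 2 be relatively prime integers and let c ∈ A_{pq}^ℤ be a configuration such that c(i) = 0 for all sufficiently small i. Then real_{pq}(F_{p,q}(c)) = (p/q) · real_{pq}(c). -/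
/-- `∑' i, digitTerm b c i` is `real_b(c)`: `c 0` is the units digit and `c 1, c 2, …` are the
digits after the point. -/
noncomputable def digitTerm (b : ℝ) (c : ℤ → ℕ) (i : ℤ) : ℝ := c (-i) * b ^ i

lemma digitTerm_nonneg {b : ℝ} (hb : 0 ≤ b) (c : ℤ → ℕ) (i : ℤ) : 0 ≤ digitTerm b c i :=
  mul_nonneg (Nat.cast_nonneg _) (zpow_nonneg hb i)

lemma digitTerm_mono {b : ℝ} (hb : 0 ≤ b) {c d : ℤ → ℕ} (hcd : ∀ i, c i ≤ d i) (i : ℤ) :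
    digitTerm b c i ≤ digitTerm b d i :=
  mul_le_mul_of_nonneg_right (by exact_mod_cast hcd (-i)) (zpow_nonneg hb i)

lemma Summable.digitTerm_of_le {b : ℝ} (hb : 0 ≤ b) {c d : ℤ → ℕ} (hcd : ∀ i, c i ≤ d i)
    (hd : Summable (digitTerm b d)) : Summable (digitTerm b c) :=
  hd.of_nonneg_of_le (digitTerm_nonneg hb c) (digitTerm_mono hb hcd)

lemma summable_digitTerm {b : ℝ} (hb : 1 < b) {c : ℤ → ℕ} {M : ℕ} (hc : ∀ i, c i ≤ M)
    {N : ℤ} (hN : ∀ i ≤ N, c i = 0) : Summable (digitTerm b c) := by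
  have hb0 : 0 < b := one_pos.trans hb
  refine summable_int_iff_summable_nat_and_neg.mpr ⟨?_, ?_⟩
  · refine summable_of_ne_finset_zero (s := Finset.range (-N).toNat) fun n hn => ?_
    rw [Finset.mem_range, not_lt] at hn
    simp [digitTerm, hN (-(n : ℤ)) (by omega)]
  · have hgeom : Summable fun n : ℕ => (M : ℝ) * b⁻¹ ^ n :=
      (summable_geometric_of_lt_one (by positivity) (inv_lt_one_of_one_lt₀ hb)).mul_left _
    refine hgeom.of_nonneg_of_le (fun n => digitTerm_nonneg hb0.le c _) fun n => ?_
    rw [digitTerm, neg_neg, zpow_neg, zpow_natCast, ← inv_pow]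
    exact mul_le_mul_of_nonneg_right (by exact_mod_cast hc n) (by positivity)

lemma digitTerm_eq_div_add_mod (b : ℝ) (c : ℤ → ℕ) (q : ℕ) (i : ℤ) :
    digitTerm b c i = q * digitTerm b (fun j => c j / q) i + digitTerm b (fun j => c j % q) i := by
  have h : (c (-i) : ℝ) = q * (c (-i) / q : ℕ) + (c (-i) % q : ℕ) := by
    exact_mod_cast (Nat.div_add_mod (c (-i)) q).symm
  simp only [digitTerm, h]
  ring

lemma digitTerm_Gca {b : ℝ} (hb : b ≠ 0) (p q : ℕ) (c : ℤ → ℕ) (i : ℤ) :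
    digitTerm b (Gca p q c) i =
      p * digitTerm b (fun j => c j % q) i + b * digitTerm b (fun j => c j / q) (i - 1) := by
  simp only [digitTerm, Gca, g, zpow_sub_one₀ hb, show -(i - 1) = -i + 1 by ring]
  push_cast
  field_simp

lemma HasSum.digitTerm_Gca {b : ℝ} {p q : ℕ} (hb : b = (p * q : ℕ)) (hb0 : b ≠ 0)
    {c : ℤ → ℕ} {S : ℝ} (hS : HasSum (digitTerm b c) S) :
    HasSum (digitTerm b (Gca p q c)) (p * S) := by
  have hb_nonneg : 0 ≤ b := by rw [hb]; positivity
  set A := ∑' i, digitTerm b (fun j => c j % q) i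
  set B := ∑' i, digitTerm b (fun j => c j / q) i
  have hmod : HasSum (digitTerm b fun j => c j % q) A :=
    (hS.summable.digitTerm_of_le hb_nonneg fun i => Nat.mod_le (c i) q).hasSum
  have hdiv : HasSum (digitTerm b fun j => c j / q) B :=
    (hS.summable.digitTerm_of_le hb_nonneg fun i => Nat.div_le_self (c i) q).hasSum
  have hS_eq : S = q * B + A := by
    refine hS.unique ?_
    simpa only [← digitTerm_eq_div_add_mod] using (hdiv.mul_left (q : ℝ)).add hmod
  have hdiv_shift : HasSum (fun i => digitTerm b (fun j => c j / q) (i - 1)) B :=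
    (Equiv.subRight (1 : ℤ)).hasSum_iff (f := digitTerm b fun j => c j / q) |>.mpr hdiv
  have hG := (hmod.mul_left (p : ℝ)).add (hdiv_shift.mul_left b)
  have hval : p * A + b * B = p * S := by
    rw [hS_eq, hb]
    push_cast
    ring
  rw [funext (_root_.digitTerm_Gca hb0 p q c), ← hval]
  exact hG

lemma HasSum.digitTerm_comp_sub_one {b : ℝ} (hb : b ≠ 0) {c : ℤ → ℕ} {S : ℝ}
    (hS : HasSum (digitTerm b c) S) : HasSum (digitTerm b fun i => c (i - 1)) (S / b) := by
  have hterm : (digitTerm b fun i => c (i - 1)) = fun i => digitTerm b c (i + 1) / b := by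
    funext i
    simp only [digitTerm, zpow_add_one₀ hb, show -(i + 1) = -i - 1 by ring]
    field_simp
  rw [hterm]
  exact ((Equiv.addRight (1 : ℤ)).hasSum_iff (f := digitTerm b c) |>.mpr hS).div_const b

theorem stmt19_general (p q : ℕ) (hp : 2 ≤ p) (hq : 2 ≤ q)
    (c : ℤ → ℕ) (hc : ∀ i, c i < p * q) (h0 : ∃ N : ℤ, ∀ i ≤ N, c i = 0) :
    HasSum (fun i : ℤ => (Fca p q c (-i) : ℝ) * ((p * q : ℕ) : ℝ) ^ i)
      (((p : ℝ) / (q : ℝ)) * ∑' i : ℤ, (c (-i) : ℝ) * ((p * q : ℕ) : ℝ) ^ i) := by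
  obtain ⟨N, hN⟩ := h0
  set b : ℝ := ((p * q : ℕ) : ℝ) with hb
  set S := ∑' i : ℤ, (c (-i) : ℝ) * b ^ i
  have hb1 : 1 < b := by
    rw [hb]
    exact_mod_cast (by nlinarith : 1 < p * q)
  have hb0 : b ≠ 0 := (one_pos.trans hb1).ne'
  have hS : HasSum (digitTerm b c) S := (summable_digitTerm hb1 (fun i => (hc i).le) hN).hasSum
  have hF := ((hS.digitTerm_Gca hb hb0).digitTerm_Gca hb hb0).digitTerm_comp_sub_one hb0
  have hval : (p : ℝ) * (p * S) / b = p / q * S := by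
    rw [hb]
    push_cast
    field_simp
  rw [hval] at hF
  exact hF

theorem stmt19 (p q : ℕ) (hp : 2 ≤ p) (hq : 2 ≤ q) (hpq : Nat.Coprime p q)
    (c : ℤ → ℕ) (hc : ∀ i, c i < p * q) (h0 : ∃ N : ℤ, ∀ i ≤ N, c i = 0) :
    HasSum (fun i : ℤ => (Fca p q c (-i) : ℝ) * ((p * q : ℕ) : ℝ) ^ i)
      (((p : ℝ) / (q : ℝ)) * ∑' i : ℤ, (c (-i) : ℝ) * ((p * q : ℕ) : ℝ) ^ i) :=
  stmt19_general p q hp hq c hc h0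
end
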